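/- arXiv:1101.1563 — 2 statements merged into one kernel-verified Lean document; each statement's English description precedes it below -/
import Mathlib

section
/- (Lemma 1) Let S ⊂ kC(X) be a Gröbner–Shirshov basis with respect to a monomial order on C(X), and let a₁·s₁·b₁ and a₂·s₂·b₂ be S-words (s₁, s₂ ∈ S) such that w = a₁·s̄₁·b₁ = a₂·s̄₂·b₂. Then a₁·s₁·b₁ ≡ a₂·s₂·b₂ mod (S, w), i.e., their difference is a k-linear combination Σᵢ αᵢ aᵢ·tᵢ·bᵢ of S-words with tᵢ ∈ S and aᵢ·t̄ᵢ·bᵢ < w. -/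
open Quiver

/-- The set of all paths of a quiver, with arbitrary sources and targets. -/
abbrev SigmaPath (V : Type) [Quiver.{0} V] : Type := Σ a b : V, Quiver.Path a b

/-- Elements of the free category partial algebra `kC(X)`, with arbitrary
sources and targets: a `k`-linear combination of parallel paths. -/
abbrev PolySigma (k : Type) [Field k] (V : Type) [Quiver.{0} V] : Type :=
  Σ a b : V, (Quiver.Path a b →₀ k)

/-- A monomial order on `C(X)`: a well-order on the set of all paths, compatible with
left and right composition whenever these compositions are defined. -/
structure IsMonomialOrder (V : Type) [Quiver.{0} V]
    (lt : SigmaPath V → SigmaPath V → Prop) : Prop where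
  wo : IsWellOrder (SigmaPath V) lt
  comp_right : ∀ {a a' b c : V} (u : Quiver.Path a b) (v : Quiver.Path a' b) (w : Quiver.Path b c),
    lt ⟨a', b, v⟩ ⟨a, b, u⟩ → lt ⟨a', c, v.comp w⟩ ⟨a, c, u.comp w⟩
  comp_left : ∀ {a b b' c : V} (u : Quiver.Path a b) (v : Quiver.Path a b') (w : Quiver.Path c a),
    lt ⟨a, b', v⟩ ⟨a, b, u⟩ → lt ⟨c, b', w.comp v⟩ ⟨c, b, w.comp u⟩

variable {V : Type} [Quiver.{0} V] {k : Type} [Field k]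

/-- `p` is the leading term (`lt`-greatest path with nonzero coefficient) of `f`. -/
def LeadIn (lt : SigmaPath V → SigmaPath V → Prop) {a b : V}
    (f : Quiver.Path a b →₀ k) (p : Quiver.Path a b) : Prop :=
  p ∈ f.support ∧ ∀ q ∈ f.support, q ≠ p → lt ⟨a, b, q⟩ ⟨a, b, p⟩

/-- `f` is monic with leading term `p`. -/
def IsMonicWith (lt : SigmaPath V → SigmaPath V → Prop) {a b : V}
    (f : Quiver.Path a b →₀ k) (p : Quiver.Path a b) : Prop :=
  LeadIn lt f p ∧ f p = 1

/-- Right multiplication of an element by a path. -/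
noncomputable def mulR {x y z : V} (f : Quiver.Path x y →₀ k) (b : Quiver.Path y z) :
    Quiver.Path x z →₀ k :=
  Finsupp.mapDomain (fun p => p.comp b) f

/-- Left multiplication of an element by a path. -/
noncomputable def mulL {x y z : V} (a : Quiver.Path x y) (g : Quiver.Path y z →₀ k) :
    Quiver.Path x z →₀ k :=
  Finsupp.mapDomain (fun p => a.comp p) g

/-- The `S`-word `a·s·b`. -/
noncomputable def sandwich {x y a₀ b₀ : V} (a : Quiver.Path a₀ x) (s : Quiver.Path x y →₀ k)
    (b : Quiver.Path y b₀) : Quiver.Path a₀ b₀ →₀ k :=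
  Finsupp.mapDomain (fun p => (a.comp p).comp b) s

/-- The ideal `Id(S)`: on each hom-set, the `k`-span of all `S`-words. -/
noncomputable def idealSpan (S : Set (PolySigma k V)) (a₀ b₀ : V) :
    Submodule k (Quiver.Path a₀ b₀ →₀ k) :=
  Submodule.span k { f | ∃ (x y : V) (s : Quiver.Path x y →₀ k)
    (a : Quiver.Path a₀ x) (b : Quiver.Path y b₀),
    (⟨x, y, s⟩ : PolySigma k V) ∈ S ∧ f = sandwich a s b }

/-- `p ≡ q mod (S, w)` : `p - q` is a `k`-linear combination of `S`-words `a·s·b`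
with `a·s̄·b < w`. -/
def ModSW (lt : SigmaPath V → SigmaPath V → Prop) (S : Set (PolySigma k V))
    (w : SigmaPath V) {a₀ b₀ : V} (p q : Quiver.Path a₀ b₀ →₀ k) : Prop :=
  p - q ∈ Submodule.span k { f : Quiver.Path a₀ b₀ →₀ k |
    ∃ (x y : V) (s : Quiver.Path x y →₀ k) (sbar : Quiver.Path x y)
      (a : Quiver.Path a₀ x) (b : Quiver.Path y b₀),
      (⟨x, y, s⟩ : PolySigma k V) ∈ S ∧ LeadIn lt s sbar ∧
      lt ⟨a₀, b₀, (a.comp sbar).comp b⟩ w ∧ f = sandwich a s b }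

/-- `S` is a Gröbner–Shirshov basis: every composition of intersection or inclusion of
elements of `S` is trivial modulo `(S, w)`. -/
def IsGSB (lt : SigmaPath V → SigmaPath V → Prop) (S : Set (PolySigma k V)) : Prop :=
  (∀ (x y z x' : V) (f : Quiver.Path x y →₀ k) (g : Quiver.Path x' z →₀ k)
     (fbar : Quiver.Path x y) (gbar : Quiver.Path x' z)
     (a : Quiver.Path x x') (b : Quiver.Path y z),
     (⟨x, y, f⟩ : PolySigma k V) ∈ S → (⟨x', z, g⟩ : PolySigma k V) ∈ S →
     IsMonicWith lt f fbar → IsMonicWith lt g gbar →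
     fbar.comp b = a.comp gbar →
     ModSW lt S ⟨x, z, fbar.comp b⟩ (mulR f b - mulL a g) 0) ∧
  (∀ (x y x' y' : V) (f : Quiver.Path x y →₀ k) (g : Quiver.Path x' y' →₀ k)
     (fbar : Quiver.Path x y) (gbar : Quiver.Path x' y')
     (a : Quiver.Path x x') (b : Quiver.Path y' y),
     (⟨x, y, f⟩ : PolySigma k V) ∈ S → (⟨x', y', g⟩ : PolySigma k V) ∈ S →
     IsMonicWith lt f fbar → IsMonicWith lt g gbar →
     fbar = (a.comp gbar).comp b →
     ModSW lt S ⟨x, y, fbar⟩ (f - sandwich a g b) 0)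

/-- `Irr(S)` on the hom-set from `a₀` to `b₀`: paths that are not of the form `a·s̄·b`. -/
def IrrSet (lt : SigmaPath V → SigmaPath V → Prop) (S : Set (PolySigma k V))
    (a₀ b₀ : V) : Set (Quiver.Path a₀ b₀) :=
  { u | ¬ ∃ (x y : V) (s : Quiver.Path x y →₀ k) (sbar : Quiver.Path x y)
      (a : Quiver.Path a₀ x) (b : Quiver.Path y b₀),
      (⟨x, y, s⟩ : PolySigma k V) ∈ S ∧ LeadIn lt s sbar ∧ u = (a.comp sbar).comp b }


private lemma path_factor {a : V} :
    ∀ {bb y₁ y₂ : V} (b₁ : Quiver.Path y₁ bb) (b₂ : Quiver.Path y₂ bb)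
      (p : Quiver.Path a y₁) (q : Quiver.Path a y₂),
      p.comp b₁ = q.comp b₂ →
      (∃ c : Quiver.Path y₂ y₁, b₂ = c.comp b₁ ∧ p = q.comp c) ∨
      (∃ c : Quiver.Path y₁ y₂, b₁ = c.comp b₂ ∧ q = p.comp c) := by
  intro bb y₁ y₂ b₁
  induction b₁ with
  | nil =>
    intro b₂ p q h
    exact Or.inl ⟨b₂, (Quiver.Path.comp_nil b₂).symm, by simpa using h⟩
  | cons t e ih =>
    intro b₂ p q h
    cases b₂ with
    | nil =>
      exact Or.inr ⟨t.cons e, (Quiver.Path.comp_nil _).symm, by simpa using h.symm⟩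
    | cons t₂ e₂ =>
      rw [Quiver.Path.comp_cons, Quiver.Path.comp_cons] at h
      simp only [Quiver.Path.cons.injEq] at h
      obtain ⟨rfl, h2, h3⟩ := h
      rcases ih t₂ p q (eq_of_heq h2) with ⟨c, hc1, hc2⟩ | ⟨c, hc1, hc2⟩
      · exact Or.inl ⟨c, by rw [Quiver.Path.comp_cons, ← hc1, eq_of_heq h3], hc2⟩
      · exact Or.inr ⟨c, by rw [Quiver.Path.comp_cons, ← hc1, eq_of_heq h3], hc2⟩

private lemma sandwich_sub {x y a₀ b₀ : V} (a : Quiver.Path a₀ x) (b : Quiver.Path y b₀)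
    (p q : Quiver.Path x y →₀ k) :
    sandwich a (p - q) b = sandwich a p b - sandwich a q b := by
  unfold sandwich
  simpa using map_sub (Finsupp.lmapDomain k k
    (fun r : Quiver.Path x y => (a.comp r).comp b)) p q

private lemma sandwich_sandwich {a₀ x y b₀ x' y' : V} (a : Quiver.Path a₀ x)
    (b : Quiver.Path y b₀) (a' : Quiver.Path x x') (b' : Quiver.Path y' y)
    (s : Quiver.Path x' y' →₀ k) :
    sandwich a (sandwich a' s b') b = sandwich (a.comp a') s (b'.comp b) := by
  unfold sandwich
  rw [← Finsupp.mapDomain_comp]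
  exact Finsupp.mapDomain_congr fun p _ => by
    simp [Function.comp, Quiver.Path.comp_assoc]

private lemma sandwich_mulR {a₀ x y z b₀ : V} (a : Quiver.Path a₀ x)
    (s : Quiver.Path x y →₀ k) (c : Quiver.Path y z) (b : Quiver.Path z b₀) :
    sandwich a (mulR s c) b = sandwich a s (c.comp b) := by
  unfold sandwich mulR
  rw [← Finsupp.mapDomain_comp]
  exact Finsupp.mapDomain_congr fun p _ => by
    simp [Function.comp, Quiver.Path.comp_assoc]

private lemma sandwich_mulL {a₀ x x' y b₀ : V} (a : Quiver.Path a₀ x)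
    (d : Quiver.Path x x') (s : Quiver.Path x' y →₀ k) (b : Quiver.Path y b₀) :
    sandwich a (mulL d s) b = sandwich (a.comp d) s b := by
  unfold sandwich mulL
  rw [← Finsupp.mapDomain_comp]
  exact Finsupp.mapDomain_congr fun p _ => by
    simp [Function.comp, Quiver.Path.comp_assoc]

private lemma ModSW.symm' {lt : SigmaPath V → SigmaPath V → Prop} {S : Set (PolySigma k V)}
    {w : SigmaPath V} {a₀ b₀ : V} {p q : Quiver.Path a₀ b₀ →₀ k}
    (h : ModSW lt S w p q) : ModSW lt S w q p := by
  unfold ModSW at h ⊢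
  simpa [neg_sub] using Submodule.neg_mem _ h

private lemma modSW_sandwich {lt : SigmaPath V → SigmaPath V → Prop}
    (hlt : IsMonomialOrder V lt) {S : Set (PolySigma k V)}
    {x y a₀ b₀ : V} (u : Quiver.Path x y)
    (a : Quiver.Path a₀ x) (b : Quiver.Path y b₀) (p : Quiver.Path x y →₀ k)
    (hp : ModSW lt S ⟨x, y, u⟩ p 0) :
    ModSW lt S ⟨a₀, b₀, (a.comp u).comp b⟩ (sandwich a p b) 0 := by
  unfold ModSW at hp ⊢
  rw [sub_zero] at hp ⊢
  set L := Finsupp.lmapDomain k k (fun r : Quiver.Path x y => (a.comp r).comp b) with hL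
  have hsw : sandwich a p b = L p := by rw [hL, Finsupp.lmapDomain_apply]; rfl
  rw [hsw]
  have hmem := Submodule.mem_map_of_mem (f := L) hp
  rw [Submodule.map_span] at hmem
  refine Submodule.span_le.mpr ?_ hmem
  rintro f ⟨g, ⟨x', y', s, sbar, a', b', hS, hlead, hlt', rfl⟩, rfl⟩
  apply Submodule.subset_span
  refine ⟨x', y', s, sbar, a.comp a', b'.comp b, hS, hlead, ?_, ?_⟩
  · have h1 := hlt.comp_right _ _ b hlt'
    have h2 := hlt.comp_left _ _ a h1
    simpa only [Quiver.Path.comp_assoc] using h2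
  · have : L (sandwich a' s b') = sandwich a (sandwich a' s b') b := by
      rw [hL, Finsupp.lmapDomain_apply]; rfl
    rw [this, sandwich_sandwich]

private lemma sword_aux {lt : SigmaPath V → SigmaPath V → Prop}
    (hlt : IsMonomialOrder V lt) {S : Set (PolySigma k V)} (hGS : IsGSB lt S)
    {a₀ b₀ x₁ y₁ x₂ y₂ : V}
    (s₁ : Quiver.Path x₁ y₁ →₀ k) (s₂ : Quiver.Path x₂ y₂ →₀ k)
    (sbar₁ : Quiver.Path x₁ y₁) (sbar₂ : Quiver.Path x₂ y₂)
    (a₁ : Quiver.Path a₀ x₁) (b₁ : Quiver.Path y₁ b₀) (a₂ : Quiver.Path a₀ x₂)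
    (hs₁ : (⟨x₁, y₁, s₁⟩ : PolySigma k V) ∈ S)
    (hs₂ : (⟨x₂, y₂, s₂⟩ : PolySigma k V) ∈ S)
    (hm₁ : IsMonicWith lt s₁ sbar₁) (hm₂ : IsMonicWith lt s₂ sbar₂)
    (c : Quiver.Path y₂ y₁) (ha : a₁.comp sbar₁ = (a₂.comp sbar₂).comp c) :
    ModSW lt S ⟨a₀, b₀, (a₁.comp sbar₁).comp b₁⟩
      (sandwich a₁ s₁ b₁) (sandwich a₂ s₂ (c.comp b₁)) := by
  rw [Quiver.Path.comp_assoc] at ha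
  rcases path_factor sbar₁ (sbar₂.comp c) a₁ a₂ ha with ⟨d, hd1, hd2⟩ | ⟨d, hd1, hd2⟩
  · -- intersection: sbar₂.comp c = d.comp sbar₁, a₁ = a₂.comp d
    subst hd2
    have hcomp := hGS.1 x₂ y₂ y₁ x₁ s₂ s₁ sbar₂ sbar₁ d c hs₂ hs₁ hm₂ hm₁ hd1
    have htr := modSW_sandwich hlt _ a₂ b₁ _ hcomp
    rw [show ((a₂.comp d).comp sbar₁ : Quiver.Path a₀ y₁) = a₂.comp (sbar₂.comp c) from by
      rw [Quiver.Path.comp_assoc, ← hd1]]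
    apply ModSW.symm'
    unfold ModSW at htr ⊢
    rw [sub_zero] at htr
    have heq : sandwich a₂ s₂ (c.comp b₁) - sandwich (a₂.comp d) s₁ b₁
        = sandwich a₂ (mulR s₂ c - mulL d s₁) b₁ := by
      rw [sandwich_sub, sandwich_mulR, sandwich_mulL]
    rw [heq]
    exact htr
  · -- inclusion: sbar₁ = d.comp (sbar₂.comp c), a₂ = a₁.comp d
    have hfact : sbar₁ = (d.comp sbar₂).comp c := by rw [hd1, Quiver.Path.comp_assoc]
    have hcomp := hGS.2 x₁ y₁ x₂ y₂ s₁ s₂ sbar₁ sbar₂ d c hs₁ hs₂ hm₁ hm₂ hfact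
    have htr := modSW_sandwich hlt _ a₁ b₁ _ hcomp
    subst hd2
    unfold ModSW at htr ⊢
    rw [sub_zero] at htr
    have heq : sandwich a₁ s₁ b₁ - sandwich (a₁.comp d) s₂ (c.comp b₁)
        = sandwich a₁ (s₁ - sandwich d s₂ c) b₁ := by
      rw [sandwich_sub, sandwich_sandwich]
    rw [heq]
    exact htr

/-- Lemma 1: if `S` is a Gröbner–Shirshov basis and `a₁·s₁·b₁`, `a₂·s₂·b₂`
are `S`-words with `w = a₁·s̄₁·b₁ = a₂·s̄₂·b₂`, then `a₁·s₁·b₁ ≡ a₂·s₂·b₂ mod (S, w)`. -/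
theorem sword_equiv_of_same_leading_word
    {V : Type} [Quiver.{0} V] {k : Type} [Field k]
    (lt : SigmaPath V → SigmaPath V → Prop) (hlt : IsMonomialOrder V lt)
    (S : Set (PolySigma k V))
    (hmonic : ∀ s ∈ S, ∃ sbar, IsMonicWith lt s.2.2 sbar)
    (hGS : IsGSB lt S)
    {a₀ b₀ x₁ y₁ x₂ y₂ : V}
    (s₁ : Quiver.Path x₁ y₁ →₀ k) (s₂ : Quiver.Path x₂ y₂ →₀ k)
    (sbar₁ : Quiver.Path x₁ y₁) (sbar₂ : Quiver.Path x₂ y₂)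
    (a₁ : Quiver.Path a₀ x₁) (b₁ : Quiver.Path y₁ b₀)
    (a₂ : Quiver.Path a₀ x₂) (b₂ : Quiver.Path y₂ b₀)
    (hs₁ : (⟨x₁, y₁, s₁⟩ : PolySigma k V) ∈ S)
    (hs₂ : (⟨x₂, y₂, s₂⟩ : PolySigma k V) ∈ S)
    (hm₁ : IsMonicWith lt s₁ sbar₁) (hm₂ : IsMonicWith lt s₂ sbar₂)
    (hw : (a₁.comp sbar₁).comp b₁ = (a₂.comp sbar₂).comp b₂) :
    ModSW lt S ⟨a₀, b₀, (a₁.comp sbar₁).comp b₁⟩ (sandwich a₁ s₁ b₁) (sandwich a₂ s₂ b₂) :=  by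
  rcases path_factor b₁ b₂ (a₁.comp sbar₁) (a₂.comp sbar₂) hw with ⟨c, hc1, hc2⟩ | ⟨c, hc1, hc2⟩
  · subst hc1
    exact sword_aux hlt hGS s₁ s₂ sbar₁ sbar₂ a₁ b₁ a₂ hs₁ hs₂ hm₁ hm₂ c hc2
  · subst hc1
    have h := sword_aux hlt hGS s₂ s₁ sbar₂ sbar₁ a₂ b₂ a₁ hs₂ hs₁ hm₂ hm₁ c hc2
    rw [show ((a₁.comp sbar₁).comp (c.comp b₂) : Quiver.Path a₀ b₀)
        = (a₂.comp sbar₂).comp b₂ from by rw [← Quiver.Path.comp_assoc, ← hc2]]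
    exact ModSW.symm' h
end

section
/- Let S ⊂ kC(X) be a nonempty Gröbner–Shirshov basis with respect to a monomial order on C(X). Then for each ordered pair of vertices (u, v), the images of the paths in Irr(S) from u to v form a k-basis of the quotient module (kC(X)/Id(S))(u, v); in particular, every nonzero f ∈ Id(S) has leading term of the form a·s̄·b for some s ∈ S and paths a, b. -/
open Quiver

variable {V : Type} [Quiver.{0} V] {k : Type} [Field k]

-- ===== auxiliary =====
namespace GSBaux

lemma path_fact {a b b' c : V} :
    ∀ (t : Quiver.Path b' c) (q : Quiver.Path b c) (p : Quiver.Path a b) (r : Quiver.Path a b'),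
    p.comp q = r.comp t → t.length ≤ q.length →
    ∃ m : Quiver.Path b b', q = m.comp t ∧ r = p.comp m := by
  intro t
  induction t with
  | nil =>
    intro q p r h _
    exact ⟨q, by simp, by simpa using h.symm⟩
  | @cons m' c t₀ e ih =>
    intro q p r h hl
    cases q with
    | nil => simp [Quiver.Path.length] at hl
    | @cons m'' _ q₀ e' =>
      rw [Quiver.Path.comp_cons, Quiver.Path.comp_cons] at h
      obtain rfl : m'' = m' := Quiver.Path.obj_eq_of_cons_eq_cons h
      have h1 : p.comp q₀ = r.comp t₀ := eq_of_heq (Quiver.Path.heq_of_cons_eq_cons h)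
      have h2 : e' = e := eq_of_heq (Quiver.Path.hom_heq_of_cons_eq_cons h)
      obtain ⟨m, hm1, hm2⟩ := ih q₀ p r h1 (by simpa [Quiver.Path.length] using hl)
      exact ⟨m, by rw [Quiver.Path.comp_cons, ← hm1, h2], hm2⟩

section
variable {lt : SigmaPath V → SigmaPath V → Prop}

lemma lt_trans' (hlt : IsMonomialOrder V lt) {x y z : SigmaPath V} (h1 : lt x y) (h2 : lt y z) : lt x z :=
  by haveI := hlt.wo; exact _root_.trans_of lt h1 h2

lemma lt_irrefl' (hlt : IsMonomialOrder V lt) (x : SigmaPath V) : ¬ lt x x := by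
  haveI := hlt.wo
  exact _root_.irrefl x

lemma lt_trichot (hlt : IsMonomialOrder V lt) (x y : SigmaPath V) : lt x y ∨ x = y ∨ lt y x :=
  by haveI := hlt.wo; exact trichotomous_of lt x y

/-- equality of parallel-path sigma pairs gives equality of paths -/
lemma sigma_path_eq {a b : V} {p q : Quiver.Path a b}
    (h : (⟨a, b, p⟩ : SigmaPath V) = ⟨a, b, q⟩) : p = q := by
  simpa using h

lemma lt_mono (hlt : IsMonomialOrder V lt) {x y a₀ b₀ : V} {p q : Quiver.Path x y} (a : Quiver.Path a₀ x)
    (b : Quiver.Path y b₀) (h : lt ⟨x, y, p⟩ ⟨x, y, q⟩) :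
    lt ⟨a₀, b₀, (a.comp p).comp b⟩ ⟨a₀, b₀, (a.comp q).comp b⟩ := by
  have h1 := hlt.comp_right q p b h
  have h2 := hlt.comp_left (q.comp b) (p.comp b) a h1
  simpa [Quiver.Path.comp_assoc] using h2

end

lemma sandwich_inj {x y a₀ b₀ : V} (a : Quiver.Path a₀ x) (b : Quiver.Path y b₀) :
    Function.Injective (fun p : Quiver.Path x y => (a.comp p).comp b) :=
  fun p q h => Quiver.Path.comp_injective_right a
    (Quiver.Path.comp_injective_left b h)

lemma sandwich_apply {x y a₀ b₀ : V} (a : Quiver.Path a₀ x) (s : Quiver.Path x y →₀ k)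
    (b : Quiver.Path y b₀) (p : Quiver.Path x y) :
    (sandwich a s b) ((a.comp p).comp b) = s p :=
  Finsupp.mapDomain_apply (sandwich_inj a b) s p

lemma mem_support_sandwich {x y a₀ b₀ : V} {a : Quiver.Path a₀ x} {s : Quiver.Path x y →₀ k}
    {b : Quiver.Path y b₀} {q : Quiver.Path a₀ b₀} :
    q ∈ (sandwich a s b).support ↔ ∃ p ∈ s.support, q = (a.comp p).comp b := by
  classical
  rw [sandwich, Finsupp.mapDomain_support_of_injective (sandwich_inj a b)]
  simp [eq_comm]

lemma lead_sandwich {lt : SigmaPath V → SigmaPath V → Prop} (hlt : IsMonomialOrder V lt)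
    {x y a₀ b₀ : V} (a : Quiver.Path a₀ x) {s : Quiver.Path x y →₀ k} {sbar : Quiver.Path x y}
    (b : Quiver.Path y b₀) (hs : LeadIn lt s sbar) :
    LeadIn lt (sandwich a s b) ((a.comp sbar).comp b) := by
  constructor
  · rw [Finsupp.mem_support_iff, sandwich_apply]
    exact Finsupp.mem_support_iff.1 hs.1
  · intro q hq hne
    obtain ⟨p, hp, rfl⟩ := mem_support_sandwich.1 hq
    have hpn : p ≠ sbar := fun h => hne (by rw [h])
    exact lt_mono hlt a b (hs.2 p hp hpn)

lemma sandwich_eq_sum {x y a₀ b₀ : V} (a : Quiver.Path a₀ x) (s : Quiver.Path x y →₀ k)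
    (b : Quiver.Path y b₀) :
    sandwich a s b = ∑ p ∈ s.support, Finsupp.single ((a.comp p).comp b) (s p) := rfl


variable {lt : SigmaPath V → SigmaPath V → Prop} {S : Set (PolySigma k V)}

/-- generators of the `(S, w)` span -/
def LowSet (lt : SigmaPath V → SigmaPath V → Prop) (S : Set (PolySigma k V))
    (w : SigmaPath V) (a₀ b₀ : V) : Set (Quiver.Path a₀ b₀ →₀ k) :=
  { f | ∃ (x y : V) (s : Quiver.Path x y →₀ k) (sbar : Quiver.Path x y)
      (a : Quiver.Path a₀ x) (b : Quiver.Path y b₀),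
      (⟨x, y, s⟩ : PolySigma k V) ∈ S ∧ LeadIn lt s sbar ∧
      lt ⟨a₀, b₀, (a.comp sbar).comp b⟩ w ∧ f = sandwich a s b }

lemma lead_unique (hlt : IsMonomialOrder V lt) {a b : V} {f : Quiver.Path a b →₀ k}
    {p q : Quiver.Path a b} (hp : LeadIn lt f p) (hq : LeadIn lt f q) : p = q := by
  by_contra hne
  exact lt_irrefl' hlt _ (lt_trans' hlt (hq.2 p hp.1 hne) (hp.2 q hq.1 (Ne.symm hne)))

lemma exists_max_list {α : Type*} (r : α → α → Prop)
    (htri : ∀ x y, r x y ∨ x = y ∨ r y x) (htr : ∀ {x y z}, r x y → r y z → r x z) :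
    ∀ (l : List α), l ≠ [] → ∃ m ∈ l, ∀ x ∈ l, x = m ∨ r x m := by
  intro l
  induction l with
  | nil => intro h; exact absurd rfl h
  | cons a l ih =>
    intro _
    rcases eq_or_ne l [] with rfl | hl
    · exact ⟨a, by simp, by simp⟩
    · obtain ⟨m, hm, hmax⟩ := ih hl
      rcases htri a m with h | h | h
      · refine ⟨m, List.mem_cons_of_mem _ hm, ?_⟩
        intro x hx
        rcases List.mem_cons.1 hx with rfl | hx
        · exact Or.inr h
        · exact hmax x hx
      · exact ⟨m, List.mem_cons_of_mem _ hm, fun x hx => by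
          rcases List.mem_cons.1 hx with rfl | hx
          · exact Or.inl h
          · exact hmax x hx⟩
      · refine ⟨a, List.mem_cons_self, ?_⟩
        intro x hx
        rcases List.mem_cons.1 hx with rfl | hx
        · exact Or.inl rfl
        · rcases hmax x hx with rfl | hx'
          · exact Or.inr h
          · exact Or.inr (htr hx' h)

lemma exists_lead (hlt : IsMonomialOrder V lt) {a b : V} {f : Quiver.Path a b →₀ k}
    (hf : f ≠ 0) : ∃ p, LeadIn lt f p := by
  have hne : f.support.toList ≠ [] := by
    simp [Finset.toList_eq_nil, Finsupp.support_eq_empty, hf]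
  obtain ⟨m, hm, hmax⟩ := exists_max_list
    (fun p q : Quiver.Path a b => lt ⟨a, b, p⟩ ⟨a, b, q⟩)
    (fun p q => by
      rcases lt_trichot hlt ⟨a, b, p⟩ ⟨a, b, q⟩ with h | h | h
      · exact Or.inl h
      · exact Or.inr (Or.inl (sigma_path_eq h))
      · exact Or.inr (Or.inr h))
    (fun h1 h2 => lt_trans' hlt h1 h2) f.support.toList hne
  refine ⟨m, Finset.mem_toList.1 hm, fun q hq hne' => ?_⟩
  rcases hmax q (Finset.mem_toList.2 hq) with rfl | h
  · exact absurd rfl hne'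
  · exact h

/-- the linear map `g ↦ a·g·b` -/
noncomputable def sandMap {x y a₀ b₀ : V} (a : Quiver.Path a₀ x) (b : Quiver.Path y b₀) :
    (Quiver.Path x y →₀ k) →ₗ[k] (Quiver.Path a₀ b₀ →₀ k) :=
  Finsupp.lmapDomain k k (fun p => (a.comp p).comp b)

lemma sandMap_sandwich {x y a₀ b₀ x' y' : V} (a : Quiver.Path a₀ x) (b : Quiver.Path y b₀)
    (c : Quiver.Path x x') (t : Quiver.Path x' y' →₀ k) (d : Quiver.Path y' y) :
    sandMap (k := k) a b (sandwich c t d) = sandwich (a.comp c) t (d.comp b) := by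
  unfold sandMap sandwich
  rw [Finsupp.lmapDomain_apply, ← Finsupp.mapDomain_comp]
  congr 1
  funext p
  simp [Function.comp, Quiver.Path.comp_assoc]

lemma sandMap_lowSet (hlt : IsMonomialOrder V lt) {x y a₀ b₀ : V} (a : Quiver.Path a₀ x)
    (b : Quiver.Path y b₀) {w : Quiver.Path x y} {g : Quiver.Path x y →₀ k}
    (hg : g ∈ Submodule.span k (LowSet lt S ⟨x, y, w⟩ x y)) :
    sandMap a b g ∈
      Submodule.span k (LowSet lt S ⟨a₀, b₀, (a.comp w).comp b⟩ a₀ b₀) := by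
  have := Submodule.mem_map_of_mem (f := sandMap (k := k) a b) hg
  rw [Submodule.map_span] at this
  refine Submodule.span_mono ?_ this
  rintro _ ⟨_, ⟨x', y', s, sbar, c, d, hS, hlead, hlt', rfl⟩, rfl⟩
  refine ⟨x', y', s, sbar, a.comp c, d.comp b, hS, hlead, ?_, sandMap_sandwich a b c s d⟩
  have := lt_mono hlt a b hlt'
  simpa [Quiver.Path.comp_assoc] using this


lemma modSW_mem {w : SigmaPath V} {a₀ b₀ : V} {p q : Quiver.Path a₀ b₀ →₀ k}
    (hm : ModSW lt S w p q) :
    p - q ∈ Submodule.span k (LowSet lt S w a₀ b₀) := hm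

lemma sandMap_eq {x y a₀ b₀ : V} (a : Quiver.Path a₀ x) (s : Quiver.Path x y →₀ k)
    (b : Quiver.Path y b₀) : sandMap (k := k) a b s = sandwich a s b := by
  simp [sandMap, sandwich, Finsupp.lmapDomain_apply]

lemma sandMap_mulR {x y z a₀ b₀ : V} (a : Quiver.Path a₀ x) (b : Quiver.Path z b₀)
    (f : Quiver.Path x y →₀ k) (m : Quiver.Path y z) :
    sandMap (k := k) a b (mulR f m) = sandwich a f (m.comp b) := by
  unfold sandMap mulR sandwich
  rw [Finsupp.lmapDomain_apply, ← Finsupp.mapDomain_comp]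
  congr 1
  funext p
  simp [Function.comp, Quiver.Path.comp_assoc]

lemma sandMap_mulL {x y z a₀ b₀ : V} (a : Quiver.Path a₀ x) (b : Quiver.Path z b₀)
    (c : Quiver.Path x y) (g : Quiver.Path y z →₀ k) :
    sandMap (k := k) a b (mulL c g) = sandwich (a.comp c) g b := by
  unfold sandMap mulL sandwich
  rw [Finsupp.lmapDomain_apply, ← Finsupp.mapDomain_comp]
  congr 1
  funext p
  simp [Function.comp, Quiver.Path.comp_assoc]

lemma diamond_le (hlt : IsMonomialOrder V lt) (hGS : IsGSB lt S)
    {x₁ y₁ x₂ y₂ a₀ b₀ : V}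
    (f : Quiver.Path x₁ y₁ →₀ k) (g : Quiver.Path x₂ y₂ →₀ k)
    (fbar : Quiver.Path x₁ y₁) (gbar : Quiver.Path x₂ y₂)
    (hfS : (⟨x₁, y₁, f⟩ : PolySigma k V) ∈ S) (hgS : (⟨x₂, y₂, g⟩ : PolySigma k V) ∈ S)
    (hf : IsMonicWith lt f fbar) (hg : IsMonicWith lt g gbar)
    (a₁ : Quiver.Path a₀ x₁) (b₁ : Quiver.Path y₁ b₀)
    (a₂ : Quiver.Path a₀ x₂) (b₂ : Quiver.Path y₂ b₀)
    (hw : (a₁.comp fbar).comp b₁ = (a₂.comp gbar).comp b₂)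
    (hlen : a₁.length ≤ a₂.length) :
    sandwich a₁ f b₁ - sandwich a₂ g b₂ ∈
      Submodule.span k (LowSet lt S ⟨a₀, b₀, (a₁.comp fbar).comp b₁⟩ a₀ b₀) := by
  classical
  have hw' : a₁.comp (fbar.comp b₁) = a₂.comp (gbar.comp b₂) := by
    simpa [Quiver.Path.comp_assoc] using hw
  have hlentot : a₁.length + (fbar.length + b₁.length)
      = a₂.length + (gbar.length + b₂.length) := by
    have := congrArg Quiver.Path.length hw'
    simpa [Quiver.Path.length_comp] using this
  obtain ⟨c, hq, ha₂⟩ := path_fact (gbar.comp b₂) (fbar.comp b₁) a₁ a₂ hw'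
    (by simp only [Quiver.Path.length_comp] at hlentot ⊢; omega)
  have hclen : a₂.length = a₁.length + c.length := by
    rw [ha₂, Quiver.Path.length_comp]
  rcases le_or_gt (a₁.length + fbar.length) a₂.length with hdisj | hc1
  · -- disjoint case
    obtain ⟨d, hb₁, hcd⟩ := path_fact (gbar.comp b₂) b₁ fbar c hq
      (by
        have := congrArg Quiver.Path.length hq
        simp only [Quiver.Path.length_comp] at this ⊢
        omega)
    subst hcd
    subst ha₂
    subst hb₁
    set A := ∑ u ∈ f.support.erase fbar,
      f u • sandwich ((a₁.comp u).comp d) g b₂ with hA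
    set B := ∑ v ∈ g.support.erase gbar,
      g v • sandwich a₁ f ((d.comp v).comp b₂) with hB
    set Q := ∑ u ∈ f.support, f u • sandwich ((a₁.comp u).comp d) g b₂ with hQ
    set Q' := ∑ v ∈ g.support, g v • sandwich a₁ f ((d.comp v).comp b₂) with hQ'
    have h1 : Q = sandwich (a₁.comp (fbar.comp d)) g b₂ + A := by
      rw [hQ, ← Finset.add_sum_erase _ _ hf.1.1, hf.2, one_smul]
      congr 2
      simp [Quiver.Path.comp_assoc]
    have hgb : (d.comp gbar).comp b₂ = d.comp (gbar.comp b₂) := by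
      simp [Quiver.Path.comp_assoc]
    have h2 : Q' = sandwich a₁ f (d.comp (gbar.comp b₂)) + B := by
      rw [hQ', ← Finset.add_sum_erase _ _ hg.1.1, hg.2, one_smul, hgb, hB]
    have h3 : Q = Q' := by
      rw [hQ, hQ']
      simp only [sandwich_eq_sum, Finset.smul_sum, Finsupp.smul_single, smul_eq_mul]
      rw [Finset.sum_comm]
      refine Finset.sum_congr rfl fun u _ => Finset.sum_congr rfl fun v _ => ?_
      rw [mul_comm]
      congr 1
      simp [Quiver.Path.comp_assoc]
    have hT : sandwich a₁ f (d.comp (gbar.comp b₂))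
        - sandwich (a₁.comp (fbar.comp d)) g b₂ = A - B := by
      have e1 : sandwich (a₁.comp (fbar.comp d)) g b₂ = Q - A := by rw [h1]; abel
      have e2 : sandwich a₁ f (d.comp (gbar.comp b₂)) = Q' - B := by rw [h2]; abel
      rw [e1, e2, h3]; abel
    rw [hT]
    refine sub_mem (Submodule.sum_mem _ fun u hu => ?_) (Submodule.sum_mem _ fun v hv => ?_)
    · refine Submodule.smul_mem _ _ (Submodule.subset_span ?_)
      refine ⟨x₂, y₂, g, gbar, (a₁.comp u).comp d, b₂, hgS, hg.1, ?_, rfl⟩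
      have hu' := Finset.mem_erase.1 hu
      have := lt_mono hlt a₁ (d.comp (gbar.comp b₂)) (hf.1.2 u hu'.2 hu'.1)
      simpa [Quiver.Path.comp_assoc] using this
    · refine Submodule.smul_mem _ _ (Submodule.subset_span ?_)
      refine ⟨x₁, y₁, f, fbar, a₁, (d.comp v).comp b₂, hfS, hf.1, ?_, rfl⟩
      have hv' := Finset.mem_erase.1 hv
      have := lt_mono hlt ((a₁.comp fbar).comp d) b₂ (hg.1.2 v hv'.2 hv'.1)
      simpa [Quiver.Path.comp_assoc] using this
  · -- overlap cases: factor out a := c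
    rcases le_or_gt (a₂.length + gbar.length) (a₁.length + fbar.length) with hincl | hints
    · -- inclusion
      obtain ⟨b, hb₂, hfbar⟩ := path_fact b₁ b₂ (c.comp gbar) fbar
        (by rw [Quiver.Path.comp_assoc]; exact hq.symm)
        (by
          have := congrArg Quiver.Path.length hq
          simp only [Quiver.Path.length_comp] at this ⊢
          omega)
      have hmod := hGS.2 x₁ y₁ x₂ y₂ f g fbar gbar c b hfS hgS hf hg hfbar
      have hmem : f - sandwich c g b ∈
          Submodule.span k (LowSet lt S ⟨x₁, y₁, fbar⟩ x₁ y₁) := by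
        have := modSW_mem (a₀ := x₁) (b₀ := y₁) hmod
        simpa using this
      have := sandMap_lowSet hlt a₁ b₁ hmem
      rw [map_sub, sandMap_eq, sandMap_sandwich] at this
      subst ha₂
      subst hb₂
      simpa [Quiver.Path.comp_assoc] using this
    · -- intersection
      obtain ⟨m, hb₁, hm⟩ := path_fact b₂ b₁ fbar (c.comp gbar)
        (by rw [Quiver.Path.comp_assoc]; exact hq)
        (by
          have := congrArg Quiver.Path.length hq
          simp only [Quiver.Path.length_comp] at this ⊢
          omega)
      have hmod := hGS.1 x₁ y₁ y₂ x₂ f g fbar gbar c m hfS hgS hf hg hm.symm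
      have hmem : mulR f m - mulL c g ∈
          Submodule.span k (LowSet lt S ⟨x₁, y₂, fbar.comp m⟩ x₁ y₂) := by
        have := modSW_mem (a₀ := x₁) (b₀ := y₂) hmod
        simpa using this
      have hmem2 := sandMap_lowSet hlt a₁ b₂ hmem
      rw [map_sub, sandMap_mulR, sandMap_mulL] at hmem2
      subst ha₂
      subst hb₁
      have hwe : (⟨a₀, b₀, (a₁.comp (fbar.comp m)).comp b₂⟩ : SigmaPath V)
          = ⟨a₀, b₀, (a₁.comp fbar).comp (m.comp b₂)⟩ := by
        simp [Quiver.Path.comp_assoc]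
      rw [hwe] at hmem2
      simpa [Quiver.Path.comp_assoc] using hmem2

lemma diamond (hlt : IsMonomialOrder V lt) (hGS : IsGSB lt S)
    {x₁ y₁ x₂ y₂ a₀ b₀ : V}
    (f : Quiver.Path x₁ y₁ →₀ k) (g : Quiver.Path x₂ y₂ →₀ k)
    (fbar : Quiver.Path x₁ y₁) (gbar : Quiver.Path x₂ y₂)
    (hfS : (⟨x₁, y₁, f⟩ : PolySigma k V) ∈ S) (hgS : (⟨x₂, y₂, g⟩ : PolySigma k V) ∈ S)
    (hf : IsMonicWith lt f fbar) (hg : IsMonicWith lt g gbar)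
    (a₁ : Quiver.Path a₀ x₁) (b₁ : Quiver.Path y₁ b₀)
    (a₂ : Quiver.Path a₀ x₂) (b₂ : Quiver.Path y₂ b₀)
    (hw : (a₁.comp fbar).comp b₁ = (a₂.comp gbar).comp b₂) :
    sandwich a₁ f b₁ - sandwich a₂ g b₂ ∈
      Submodule.span k (LowSet lt S ⟨a₀, b₀, (a₁.comp fbar).comp b₁⟩ a₀ b₀) := by
  rcases le_total a₁.length a₂.length with h | h
  · exact diamond_le hlt hGS f g fbar gbar hfS hgS hf hg a₁ b₁ a₂ b₂ hw h
  · have := diamond_le hlt hGS g f gbar fbar hgS hfS hg hf a₂ b₂ a₁ b₁ hw.symm h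
    rw [← hw] at this
    have hneg := Submodule.neg_mem _ this
    simpa using hneg


/-- `fbar` is reducible -/
def Red (lt : SigmaPath V → SigmaPath V → Prop) (S : Set (PolySigma k V))
    {a₀ b₀ : V} (fbar : Quiver.Path a₀ b₀) : Prop :=
  ∃ (x y : V) (s : Quiver.Path x y →₀ k) (sbar : Quiver.Path x y)
    (a : Quiver.Path a₀ x) (b : Quiver.Path y b₀),
    (⟨x, y, s⟩ : PolySigma k V) ∈ S ∧ LeadIn lt s sbar ∧ fbar = (a.comp sbar).comp b

/-- packaged scaled `S`-word -/
structure WD (lt : SigmaPath V → SigmaPath V → Prop) (S : Set (PolySigma k V))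
    (a₀ b₀ : V) where
  x : V
  y : V
  a : Quiver.Path a₀ x
  s : Quiver.Path x y →₀ k
  sbar : Quiver.Path x y
  b : Quiver.Path y b₀
  c : k
  hS : (⟨x, y, s⟩ : PolySigma k V) ∈ S
  hm : IsMonicWith lt s sbar

variable {a₀ b₀ : V}

noncomputable def WD.val (wd : WD lt S a₀ b₀) : Quiver.Path a₀ b₀ →₀ k :=
  wd.c • sandwich wd.a wd.s wd.b

def WD.wpath (wd : WD lt S a₀ b₀) : Quiver.Path a₀ b₀ := (wd.a.comp wd.sbar).comp wd.b

def WD.wlead (wd : WD lt S a₀ b₀) : SigmaPath V := ⟨a₀, b₀, wd.wpath⟩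

def WD.scale (r : k) (wd : WD lt S a₀ b₀) : WD lt S a₀ b₀ := { wd with c := r * wd.c }

@[simp] lemma WD.scale_wlead (r : k) (wd : WD lt S a₀ b₀) :
    (wd.scale r).wlead = wd.wlead := rfl

lemma WD.scale_val (r : k) (wd : WD lt S a₀ b₀) : (wd.scale r).val = r • wd.val := by
  simp [WD.val, WD.scale, mul_smul]

noncomputable def lsum (l : List (WD lt S a₀ b₀)) : Quiver.Path a₀ b₀ →₀ k :=
  (l.map WD.val).sum

@[simp] lemma lsum_nil : lsum ([] : List (WD lt S a₀ b₀)) = 0 := rfl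

@[simp] lemma lsum_cons (wd : WD lt S a₀ b₀) (l : List (WD lt S a₀ b₀)) :
    lsum (wd :: l) = wd.val + lsum l := by simp [lsum]

@[simp] lemma lsum_append (l₁ l₂ : List (WD lt S a₀ b₀)) :
    lsum (l₁ ++ l₂) = lsum l₁ + lsum l₂ := by simp [lsum]

lemma lsum_scale (r : k) (l : List (WD lt S a₀ b₀)) :
    lsum (l.map (WD.scale r)) = r • lsum l := by
  induction l with
  | nil => simp
  | cons wd l ih => simp [ih, WD.scale_val, smul_add]

lemma lsum_support {l : List (WD lt S a₀ b₀)} {q : Quiver.Path a₀ b₀}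
    (hq : lsum l q ≠ 0) : ∃ wd ∈ l, wd.val q ≠ 0 := by
  induction l with
  | nil => simp [lsum] at hq
  | cons wd l ih =>
    rw [lsum_cons, Finsupp.add_apply] at hq
    rcases eq_or_ne (wd.val q) 0 with h | h
    · rw [h, zero_add] at hq
      obtain ⟨wd', h1, h2⟩ := ih hq
      exact ⟨wd', List.mem_cons_of_mem _ h1, h2⟩
    · exact ⟨wd, List.mem_cons_self, h⟩

lemma WD.val_support (hlt : IsMonomialOrder V lt) (wd : WD lt S a₀ b₀)
    {q : Quiver.Path a₀ b₀} (hq : wd.val q ≠ 0) :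
    q = wd.wpath ∨ lt ⟨a₀, b₀, q⟩ wd.wlead := by
  have hq' : sandwich wd.a wd.s wd.b q ≠ 0 := by
    intro h
    apply hq
    simp [WD.val, h]
  have hmem : q ∈ (sandwich wd.a wd.s wd.b).support := Finsupp.mem_support_iff.2 hq'
  obtain ⟨p, hp, rfl⟩ := mem_support_sandwich.1 hmem
  rcases eq_or_ne p wd.sbar with rfl | hne
  · exact Or.inl rfl
  · exact Or.inr (lt_mono hlt wd.a wd.b (wd.hm.1.2 p hp hne))

lemma WD.val_wpath (wd : WD lt S a₀ b₀) : wd.val wd.wpath = wd.c := by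
  rw [WD.val, Finsupp.smul_apply, WD.wpath, sandwich_apply, wd.hm.2, smul_eq_mul, mul_one]

lemma lsum_apply_zero (hlt : IsMonomialOrder V lt) {l : List (WD lt S a₀ b₀)}
    {q : Quiver.Path a₀ b₀} (h : ∀ wd ∈ l, lt wd.wlead ⟨a₀, b₀, q⟩) : lsum l q = 0 := by
  induction l with
  | nil => simp [lsum]
  | cons wd l ih =>
    rw [lsum_cons, Finsupp.add_apply, ih (fun wd' h' => h wd' (List.mem_cons_of_mem _ h')),
      add_zero]
    by_contra hne
    rcases WD.val_support hlt wd hne with rfl | hlt'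
    · exact lt_irrefl' hlt _ (h wd (List.mem_cons_self))
    · exact lt_irrefl' hlt _ (lt_trans' hlt hlt' (h wd (List.mem_cons_self)))

lemma span_low_to_list (hlt : IsMonomialOrder V lt)
    (hmonic : ∀ s ∈ S, ∃ sbar, IsMonicWith lt s.2.2 sbar)
    (W : SigmaPath V) {g : Quiver.Path a₀ b₀ →₀ k}
    (hg : g ∈ Submodule.span k (LowSet lt S W a₀ b₀)) :
    ∃ l : List (WD lt S a₀ b₀), (∀ wd ∈ l, lt wd.wlead W) ∧ lsum l = g := by
  refine Submodule.span_induction ?_ ?_ ?_ ?_ hg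
  · rintro f ⟨x, y, s, sbar, a, b, hS, hlead, hlt', rfl⟩
    obtain ⟨sbar', hm⟩ := hmonic ⟨x, y, s⟩ hS
    have heq : sbar' = sbar := lead_unique hlt hm.1 hlead
    refine ⟨[⟨x, y, a, s, sbar', b, 1, hS, hm⟩], ?_, by simp [lsum, WD.val]⟩
    intro wd hwd
    rw [List.mem_singleton] at hwd
    subst hwd
    show lt ⟨a₀, b₀, (a.comp sbar').comp b⟩ W
    rw [heq]
    exact hlt'
  · exact ⟨[], by simp, rfl⟩
  · rintro f g' _ _ ⟨l₁, h₁, rfl⟩ ⟨l₂, h₂, rfl⟩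
    exact ⟨l₁ ++ l₂, fun wd h => by
      rcases List.mem_append.1 h with h | h
      exacts [h₁ wd h, h₂ wd h], by simp⟩
  · rintro r f _ ⟨l, hl, rfl⟩
    exact ⟨l.map (WD.scale r), fun wd h => by
      obtain ⟨wd', h', rfl⟩ := List.mem_map.1 h
      simpa using hl wd' h', lsum_scale r l⟩

lemma ideal_to_list (hlt : IsMonomialOrder V lt)
    (hmonic : ∀ s ∈ S, ∃ sbar, IsMonicWith lt s.2.2 sbar)
    {f : Quiver.Path a₀ b₀ →₀ k} (hf : f ∈ idealSpan S a₀ b₀) :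
    ∃ l : List (WD lt S a₀ b₀), lsum l = f := by
  refine Submodule.span_induction ?_ ?_ ?_ ?_ hf
  · rintro f ⟨x, y, s, a, b, hS, rfl⟩
    obtain ⟨sbar, hm⟩ := hmonic ⟨x, y, s⟩ hS
    exact ⟨[⟨x, y, a, s, sbar, b, 1, hS, hm⟩], by simp [lsum, WD.val]⟩
  · exact ⟨[], rfl⟩
  · rintro f g' _ _ ⟨l₁, rfl⟩ ⟨l₂, rfl⟩
    exact ⟨l₁ ++ l₂, by simp⟩
  · rintro r f _ ⟨l, rfl⟩
    exact ⟨l.map (WD.scale r), lsum_scale r l⟩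


noncomputable def pwP (W : SigmaPath V) : WD lt S a₀ b₀ → Bool :=
  fun wd => @decide (wd.c ≠ 0 ∧ wd.wlead = W) (Classical.propDecidable _)

lemma pwP_iff {W : SigmaPath V} {wd : WD lt S a₀ b₀} :
    pwP W wd = true ↔ (wd.c ≠ 0 ∧ wd.wlead = W) := by
  rw [pwP, @decide_eq_true_eq _ (Classical.propDecidable _)]

noncomputable def pnz : WD lt S a₀ b₀ → Bool :=
  fun wd => @decide (wd.c ≠ 0) (Classical.propDecidable _)

lemma pnz_iff {wd : WD lt S a₀ b₀} : pnz wd = true ↔ wd.c ≠ 0 := by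
  rw [pnz, @decide_eq_true_eq _ (Classical.propDecidable _)]

noncomputable def nW (W : SigmaPath V) (l : List (WD lt S a₀ b₀)) : ℕ :=
  l.countP (pwP W)

lemma exists_first {α : Type*} (p : α → Bool) :
    ∀ l : List α, 0 < l.countP p →
      ∃ l₁ a l₂, l = l₁ ++ a :: l₂ ∧ p a = true ∧ l₁.countP p = 0 := by
  intro l
  induction l with
  | nil => simp
  | cons b t ih =>
    intro h
    by_cases hb : p b = true
    · exact ⟨[], b, t, rfl, hb, rfl⟩
    · have h' : 0 < t.countP p := by
        rw [List.countP_cons, if_neg hb, add_zero] at h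
        exact h
      obtain ⟨l₁, a, l₂, rfl, ha, h0⟩ := ih h'
      exact ⟨b :: l₁, a, l₂, rfl, ha, by simp [List.countP_cons, hb, h0]⟩

lemma lsum_filter (l : List (WD lt S a₀ b₀)) :
    lsum (l.filter pnz) = lsum l := by
  induction l with
  | nil => simp
  | cons wd l ih =>
    rw [List.filter_cons]
    by_cases h : wd.c = 0
    · have hv : wd.val = 0 := by simp [WD.val, h]
      rw [if_neg (by rw [pnz_iff]; exact fun hn => hn h), ih, lsum_cons, hv, zero_add]
    · rw [if_pos (pnz_iff.2 h), lsum_cons, lsum_cons, ih]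

lemma main_ind (hlt : IsMonomialOrder V lt) (hGS : IsGSB lt S)
    (hmonic : ∀ s ∈ S, ∃ sbar, IsMonicWith lt s.2.2 sbar) :
    ∀ (p : SigmaPath V × ℕ) {a₀ b₀ : V} (l : List (WD lt S a₀ b₀)),
      (∀ wd ∈ l, wd.wlead = p.1 ∨ lt wd.wlead p.1) → nW p.1 l ≤ p.2 →
      ∀ fbar : Quiver.Path a₀ b₀, LeadIn lt (lsum l) fbar → Red lt S fbar := by
  intro p
  refine (hlt.wo.toIsWellFounded.wf.prod_lex (Nat.lt_wfRel.wf)).induction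
    (C := fun p => ∀ {a₀ b₀ : V} (l : List (WD lt S a₀ b₀)),
      (∀ wd ∈ l, wd.wlead = p.1 ∨ lt wd.wlead p.1) → nW p.1 l ≤ p.2 →
      ∀ fbar : Quiver.Path a₀ b₀, LeadIn lt (lsum l) fbar → Red lt S fbar) p ?_
  clear p
  rintro ⟨W, n⟩ IH a₀ b₀ l hle hcount fbar hlead
  set l' := l.filter pnz with hl'
  have hl'sum : lsum l' = lsum l := lsum_filter l
  have hall : ∀ wd ∈ l', wd.c ≠ 0 := by
    intro wd h
    exact pnz_iff.1 (List.of_mem_filter h)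
  have hle' : ∀ wd ∈ l', wd.wlead = W ∨ lt wd.wlead W := fun wd h =>
    hle wd (List.mem_of_mem_filter h)
  have hcount' : nW W l' ≤ n :=
    le_trans ((List.filter_sublist (l := l)).countP_le (p := pwP W)) hcount
  rcases Nat.eq_zero_or_pos (nW W l') with hn | hn
  · -- no word with leading word W: restart with smaller W
    rcases eq_or_ne l' [] with h0 | h0
    · exfalso
      have hz : lsum l = 0 := by rw [← hl'sum, h0, lsum_nil]
      have := hlead.1
      rw [hz] at this
      simp at this
    · obtain ⟨W', hW'mem, hW'max⟩ := exists_max_list lt (lt_trichot hlt)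
        (fun h1 h2 => lt_trans' hlt h1 h2) (l'.map WD.wlead) (by simpa using h0)
      obtain ⟨wd', hwd'₁, hwd'₂⟩ := List.mem_map.1 hW'mem
      have hW'W : lt W' W := by
        rcases hle' wd' hwd'₁ with he | hl2
        · exfalso
          have : 0 < nW W l' := by
            rw [nW, List.countP_pos_iff]
            exact ⟨wd', hwd'₁, pwP_iff.2 ⟨hall wd' hwd'₁, he⟩⟩
          omega
        · rw [← hwd'₂]; exact hl2
      exact IH (W', nW W' l') (Prod.Lex.left _ _ hW'W) l'
        (fun wd h => hW'max wd.wlead (List.mem_map_of_mem h)) le_rfl fbar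
        (by rw [hl'sum]; exact hlead)
  · obtain ⟨l₁, wd₁, l₂, hsplit, hP₁, hz₁⟩ := exists_first (pwP W) l' hn
    have hc₁ : wd₁.c ≠ 0 ∧ wd₁.wlead = W := pwP_iff.1 hP₁
    rcases Nat.eq_zero_or_pos (l₂.countP (pwP W)) with h2z | h2pos
    · -- unique maximal word: the lead of the sum is reducible
      have hothers : ∀ wd, (wd ∈ l₁ ∨ wd ∈ l₂) → lt wd.wlead W := by
        intro wd h
        have hwdl' : wd ∈ l' := by
          rw [hsplit]
          rcases h with h | h
          · exact List.mem_append.2 (Or.inl h)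
          · exact List.mem_append.2 (Or.inr (List.mem_cons_of_mem _ h))
        have hnp : ¬ (pwP (a₀ := a₀) (b₀ := b₀) W wd = true) := by
          rcases h with h | h
          · exact List.countP_eq_zero.1 hz₁ wd h
          · exact List.countP_eq_zero.1 h2z wd h
        have hne : wd.wlead ≠ W := by
          intro he
          exact hnp (pwP_iff.2 ⟨hall wd hwdl', he⟩)
        rcases hle' wd hwdl' with he | hl2
        · exact absurd he hne
        · exact hl2
      have hWeq : W = (⟨a₀, b₀, wd₁.wpath⟩ : SigmaPath V) := hc₁.2.symm
      have hmemW : LeadIn lt (lsum l') wd₁.wpath := by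
        constructor
        · rw [Finsupp.mem_support_iff, hsplit, lsum_append, lsum_cons,
            Finsupp.add_apply, Finsupp.add_apply]
          rw [lsum_apply_zero hlt (fun wd h => hWeq ▸ hothers wd (Or.inl h)),
            lsum_apply_zero hlt (fun wd h => hWeq ▸ hothers wd (Or.inr h)),
            WD.val_wpath, zero_add, add_zero]
          exact hc₁.1
        · intro q hq hne
          obtain ⟨wd, hwdmem, hval⟩ := lsum_support (Finsupp.mem_support_iff.1 hq)
          have hwdcase : wd ∈ l₁ ∨ wd = wd₁ ∨ wd ∈ l₂ := by
            rw [hsplit] at hwdmem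
            rcases List.mem_append.1 hwdmem with h | h
            · exact Or.inl h
            · rcases List.mem_cons.1 h with h | h
              · exact Or.inr (Or.inl h)
              · exact Or.inr (Or.inr h)
          have hgoal : lt ⟨a₀, b₀, q⟩ W → lt ⟨a₀, b₀, q⟩ ⟨a₀, b₀, wd₁.wpath⟩ := by
            rw [← hWeq]; exact id
          have hql : ∀ wd : WD lt S a₀ b₀, q = wd.wpath →
              (⟨a₀, b₀, q⟩ : SigmaPath V) = wd.wlead := by
            intro wd h
            rw [h]
            rfl
          rcases WD.val_support hlt wd hval with heq | hlt2
          · rcases hwdcase with h | h | h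
            · exact hgoal (by rw [hql wd heq]; exact hothers wd (Or.inl h))
            · subst h
              exact absurd heq hne
            · exact hgoal (by rw [hql wd heq]; exact hothers wd (Or.inr h))
          · rcases hwdcase with h | h | h
            · exact hgoal (lt_trans' hlt hlt2 (hothers wd (Or.inl h)))
            · subst h
              exact hgoal (by rw [← hc₁.2]; exact hlt2)
            · exact hgoal (lt_trans' hlt hlt2 (hothers wd (Or.inr h)))
      have hfb : fbar = wd₁.wpath := by
        apply lead_unique hlt hlead
        rw [← hl'sum]
        exact hmemW
      exact ⟨wd₁.x, wd₁.y, wd₁.s, wd₁.sbar, wd₁.a, wd₁.b, wd₁.hS, wd₁.hm.1, hfb⟩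
    · -- two words with the same leading word W: merge them using the diamond lemma
      obtain ⟨l₃, wd₂, l₄, hsplit₂, hP₂, hz₃⟩ := exists_first (pwP W) l₂ h2pos
      have hc₂ : wd₂.c ≠ 0 ∧ wd₂.wlead = W := pwP_iff.1 hP₂
      have hweq : (wd₂.a.comp wd₂.sbar).comp wd₂.b = (wd₁.a.comp wd₁.sbar).comp wd₁.b := by
        have : wd₂.wlead = wd₁.wlead := by rw [hc₂.2, hc₁.2]
        exact sigma_path_eq this
      have hdia := diamond hlt hGS wd₂.s wd₁.s wd₂.sbar wd₁.sbar wd₂.hS wd₁.hS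
        wd₂.hm wd₁.hm wd₂.a wd₂.b wd₁.a wd₁.b hweq
      have hWw : (⟨a₀, b₀, (wd₂.a.comp wd₂.sbar).comp wd₂.b⟩ : SigmaPath V) = W := hc₂.2
      rw [hWw] at hdia
      obtain ⟨ld, hldlt, hldsum⟩ := span_low_to_list hlt hmonic W hdia
      set wd₁' : WD lt S a₀ b₀ :=
        ⟨wd₁.x, wd₁.y, wd₁.a, wd₁.s, wd₁.sbar, wd₁.b, wd₁.c + wd₂.c, wd₁.hS, wd₁.hm⟩
        with hwd₁'
      set lnew := l₁ ++ wd₁' :: (l₃ ++ ld.map (WD.scale wd₂.c) ++ l₄) with hlnew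
      have hsum : lsum lnew = lsum l' := by
        rw [hlnew, hsplit, hsplit₂]
        simp only [lsum_append, lsum_cons, lsum_scale, hldsum]
        have hval : wd₁'.val = wd₁.val + wd₂.c • sandwich wd₁.a wd₁.s wd₁.b := by
          rw [hwd₁']
          simp [WD.val, add_smul]
        have hval₂ : wd₂.val = wd₂.c • sandwich wd₂.a wd₂.s wd₂.b := rfl
        rw [hval, hval₂, smul_sub]
        abel
      have hsub3 : ∀ wd : WD lt S a₀ b₀, (wd ∈ l₁ ∨ wd ∈ l₃ ∨ wd ∈ l₄) → wd ∈ l' := by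
        intro wd h
        rw [hsplit, hsplit₂]
        simp only [List.mem_append, List.mem_cons]
        tauto
      have hleN : ∀ wd ∈ lnew, wd.wlead = W ∨ lt wd.wlead W := by
        intro wd h
        rw [hlnew] at h
        rcases List.mem_append.1 h with h | h
        · exact hle' wd (hsub3 wd (Or.inl h))
        · rcases List.mem_cons.1 h with h | h
          · exact Or.inl (by rw [h]; exact hc₁.2)
          · rcases List.mem_append.1 h with h | h
            · rcases List.mem_append.1 h with h | h
              · exact hle' wd (hsub3 wd (Or.inr (Or.inl h)))
              · obtain ⟨wd', hwd', rfl⟩ := List.mem_map.1 h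
                exact Or.inr (by rw [WD.scale_wlead]; exact hldlt wd' hwd')
            · exact hle' wd (hsub3 wd (Or.inr (Or.inr h)))
      have hcsplit : nW W l' = 1 + l₂.countP (pwP W) := by
        rw [nW, hsplit, List.countP_append, List.countP_cons, hz₁, if_pos hP₁]
        omega
      have hscaled : (ld.map (WD.scale wd₂.c)).countP (pwP W) = 0 := by
        rw [List.countP_eq_zero]
        intro wd h
        obtain ⟨wd', hwd', rfl⟩ := List.mem_map.1 h
        intro hp
        have := (pwP_iff.1 hp).2
        rw [WD.scale_wlead] at this
        exact lt_irrefl' hlt W (this ▸ hldlt wd' hwd')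
      have hc4 : l₂.countP (pwP W) = 1 + l₄.countP (pwP W) := by
        rw [hsplit₂, List.countP_append, List.countP_cons, hz₃, if_pos hP₂]
        omega
      have hcountN : nW W lnew ≤ l₂.countP (pwP W) := by
        rw [hlnew, nW, List.countP_append, List.countP_cons, List.countP_append,
          List.countP_append, hz₁, hz₃, hscaled]
        have : (if pwP W wd₁' = true then 1 else 0) ≤ 1 := by split <;> omega
        omega
      have hlt2 : l₂.countP (pwP W) < n := by omega
      exact IH (W, l₂.countP (pwP W)) (Prod.Lex.right W hlt2) lnew hleN hcountN fbar
        (by rw [hsum, hl'sum]; exact hlead)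


lemma ideal_lead (hlt : IsMonomialOrder V lt) (hGS : IsGSB lt S)
    (hmonic : ∀ s ∈ S, ∃ sbar, IsMonicWith lt s.2.2 sbar)
    {a₀ b₀ : V} {f : Quiver.Path a₀ b₀ →₀ k} (hf : f ∈ idealSpan S a₀ b₀) (hf0 : f ≠ 0)
    (fbar : Quiver.Path a₀ b₀) (hl : LeadIn lt f fbar) : Red lt S fbar := by
  obtain ⟨l, rfl⟩ := ideal_to_list hlt hmonic hf
  have hlne : l ≠ [] := by
    intro h
    exact hf0 (by rw [h, lsum_nil])
  obtain ⟨W, hWmem, hWmax⟩ := exists_max_list lt (lt_trichot hlt)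
    (fun h1 h2 => lt_trans' hlt h1 h2) (l.map WD.wlead) (by simpa using hlne)
  exact main_ind hlt hGS hmonic (W, nW W l) l
    (fun wd h => hWmax wd.wlead (List.mem_map_of_mem h)) le_rfl fbar hl

lemma mk_single_mem (hlt : IsMonomialOrder V lt)
    (hmonic : ∀ s ∈ S, ∃ sbar, IsMonicWith lt s.2.2 sbar) :
    ∀ σ : SigmaPath V,
      Submodule.Quotient.mk (p := idealSpan S σ.1 σ.2.1) (Finsupp.single σ.2.2 1) ∈
        Submodule.span k (Set.range
          (fun u : IrrSet lt S σ.1 σ.2.1 =>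
            Submodule.Quotient.mk (p := idealSpan S σ.1 σ.2.1) (Finsupp.single u.1 1))) := by
  classical
  intro σ
  induction σ using WellFounded.induction (r := lt) (hwf := hlt.wo.toIsWellFounded.wf) with
  | _ σ IH =>
  obtain ⟨a₀, b₀, u⟩ := σ
  by_cases hu : u ∈ IrrSet lt S a₀ b₀
  · exact Submodule.subset_span ⟨⟨u, hu⟩, rfl⟩
  · obtain ⟨x, y, s, sbar, a, b, hS, hlead, hueq⟩ := not_not.1 hu
    obtain ⟨sbar', hm⟩ := hmonic ⟨x, y, s⟩ hS
    have heq : sbar' = sbar := lead_unique hlt hm.1 hlead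
    subst heq
    have key : Finsupp.single u 1 = sandwich a s b
        - ∑ v ∈ s.support.erase sbar', Finsupp.single ((a.comp v).comp b) (s v) := by
      rw [sandwich_eq_sum, ← Finset.add_sum_erase _ _ hm.1.1, hm.2, hueq]
      abel
    have hmk : Submodule.Quotient.mk (p := idealSpan S a₀ b₀) (Finsupp.single u 1)
        = - ∑ v ∈ s.support.erase sbar', s v •
            Submodule.Quotient.mk (p := idealSpan S a₀ b₀)
              (Finsupp.single ((a.comp v).comp b) 1) := by
      have h0 : Submodule.Quotient.mk (p := idealSpan S a₀ b₀) (sandwich a s b) = 0 :=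
        (Submodule.Quotient.mk_eq_zero _).2
          (Submodule.subset_span ⟨x, y, s, a, b, hS, rfl⟩)
      rw [key]
      rw [show ∀ p q : Quiver.Path a₀ b₀ →₀ k,
        Submodule.Quotient.mk (p := idealSpan S a₀ b₀) (p - q)
          = Submodule.Quotient.mk (p := idealSpan S a₀ b₀) p
            - Submodule.Quotient.mk (p := idealSpan S a₀ b₀) q from
        fun p q => rfl]
      rw [h0, zero_sub]
      congr 1
      rw [show (Submodule.Quotient.mk (p := idealSpan S a₀ b₀) :
          (Quiver.Path a₀ b₀ →₀ k) → _) = (idealSpan S a₀ b₀).mkQ from rfl, map_sum]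
      refine Finset.sum_congr rfl fun v _ => ?_
      rw [show Finsupp.single ((a.comp v).comp b) (s v)
          = s v • Finsupp.single ((a.comp v).comp b) (1 : k) by
        rw [Finsupp.smul_single', mul_one], map_smul]
    rw [hmk]
    refine Submodule.neg_mem _ (Submodule.sum_mem _ fun v hv => Submodule.smul_mem _ _ ?_)
    have hv' := Finset.mem_erase.1 hv
    have hlt' : lt ⟨a₀, b₀, (a.comp v).comp b⟩ ⟨a₀, b₀, u⟩ := by
      rw [hueq]
      exact lt_mono hlt a b (hm.1.2 v hv'.2 hv'.1)
    exact IH ⟨a₀, b₀, (a.comp v).comp b⟩ hlt'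

end GSBaux

/-- if `S` is a nonempty Gröbner–Shirshov basis of monic elements with respect
to a monomial order, then for each pair of vertices the images of the irreducible paths form
a `k`-basis of the quotient module, and every nonzero `f ∈ Id(S)` has leading term of the
form `a·s̄·b` with `s ∈ S`. -/
theorem gsb_implies_basis_and_leading_term
    {V : Type} [Quiver.{0} V] {k : Type} [Field k]
    (lt : SigmaPath V → SigmaPath V → Prop) (hlt : IsMonomialOrder V lt)
    (S : Set (PolySigma k V)) (hne : S.Nonempty)
    (hmonic : ∀ s ∈ S, ∃ sbar, IsMonicWith lt s.2.2 sbar)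
    (hGS : IsGSB lt S) :
    (∀ a₀ b₀ : V,
      LinearIndependent k
        (fun u : IrrSet lt S a₀ b₀ =>
          Submodule.Quotient.mk (p := idealSpan S a₀ b₀) (Finsupp.single u.1 1)) ∧
      Submodule.span k (Set.range
        (fun u : IrrSet lt S a₀ b₀ =>
          Submodule.Quotient.mk (p := idealSpan S a₀ b₀) (Finsupp.single u.1 1))) = ⊤) ∧
    (∀ (a₀ b₀ : V) (f : Quiver.Path a₀ b₀ →₀ k), f ∈ idealSpan S a₀ b₀ → f ≠ 0 →
      ∀ fbar : Quiver.Path a₀ b₀, LeadIn lt f fbar →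
        ∃ (x y : V) (s : Quiver.Path x y →₀ k) (sbar : Quiver.Path x y)
          (a : Quiver.Path a₀ x) (b : Quiver.Path y b₀),
          (⟨x, y, s⟩ : PolySigma k V) ∈ S ∧ LeadIn lt s sbar ∧
          fbar = (a.comp sbar).comp b) := by
  classical
  constructor
  · intro a₀ b₀
    constructor
    · rw [linearIndependent_iff]
      intro c hc
      by_contra hcne
      set g : Quiver.Path a₀ b₀ →₀ k := Finsupp.mapDomain Subtype.val c with hg
      have hgne : g ≠ 0 := by
        intro h
        exact hcne (Finsupp.mapDomain_injective Subtype.val_injective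
          (by rw [← hg, h, Finsupp.mapDomain_zero]))
      have hmkg : (idealSpan S a₀ b₀).mkQ g = Finsupp.linearCombination k
          (fun u : IrrSet lt S a₀ b₀ =>
            Submodule.Quotient.mk (p := idealSpan S a₀ b₀) (Finsupp.single u.1 1)) c := by
        rw [Finsupp.linearCombination_apply, hg, Finsupp.mapDomain, Finsupp.sum,
          Finsupp.sum, map_sum]
        refine Finset.sum_congr rfl fun i _ => ?_
        rw [show Finsupp.single (i.1 : Quiver.Path a₀ b₀) (c i)
            = c i • Finsupp.single i.1 (1 : k) by rw [Finsupp.smul_single', mul_one],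
          map_smul]
        rfl
      have hgmem : g ∈ idealSpan S a₀ b₀ := by
        rw [← Submodule.Quotient.mk_eq_zero (idealSpan S a₀ b₀)]
        show (idealSpan S a₀ b₀).mkQ g = 0
        rw [hmkg, hc]
      obtain ⟨fbar, hlead⟩ := GSBaux.exists_lead hlt hgne
      have hred := GSBaux.ideal_lead hlt hGS hmonic hgmem hgne fbar hlead
      have hsup : fbar ∈ c.support.image Subtype.val :=
        Finsupp.mapDomain_support (by rw [← hg]; exact hlead.1)
      obtain ⟨i, _, hi⟩ := Finset.mem_image.1 hsup
      rw [← hi] at hred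
      exact i.2 hred
    · rw [eq_top_iff]
      rintro q -
      obtain ⟨g, rfl⟩ := Submodule.Quotient.mk_surjective _ q
      have hmk : Submodule.Quotient.mk (p := idealSpan S a₀ b₀) g
          = ∑ u ∈ g.support, g u •
              Submodule.Quotient.mk (p := idealSpan S a₀ b₀) (Finsupp.single u 1) := by
        conv_lhs => rw [← Finsupp.sum_single g]
        rw [show (Submodule.Quotient.mk (p := idealSpan S a₀ b₀) :
            (Quiver.Path a₀ b₀ →₀ k) → _) = (idealSpan S a₀ b₀).mkQ from rfl]
        rw [Finsupp.sum, map_sum]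
        refine Finset.sum_congr rfl fun u _ => ?_
        rw [show Finsupp.single u (g u) = g u • Finsupp.single u (1 : k) by
          rw [Finsupp.smul_single', mul_one], map_smul]
      rw [hmk]
      exact Submodule.sum_mem _ fun u _ =>
        Submodule.smul_mem _ _ (GSBaux.mk_single_mem hlt hmonic ⟨a₀, b₀, u⟩)
  · intro a₀ b₀ f hf hf0 fbar hlead
    exact GSBaux.ideal_lead hlt hGS hmonic hf hf0 fbar hlead
end
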